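/- There exists a constant L > 0, depending only on B, R and C (and in particular independent of γ, f, g and r), such that for every γ > 0 and all z, z', Z, Z' ∈ ℝ^d with |z| ≤ C, |Z| ≤ C and |Z'| ≤ C: |G_g(z', Z') − G(z, Z)| ≤ L(1 + e^{L/γ} + γ^{-1} e^{L/γ}) |z' − z| + L |Z' − Z| + L(1 + γ^{-1} e^{L/γ}) · sup_{a∈𝒜} |(f(a) − g(a))·z'|. -/

import Mathlib

open MeasureTheory
open scoped RealInnerProductSpace

/-- The Gibbs probability density `π_z(a) ∝ exp((f(a)·z + r(a))/γ)` on the set `𝒜`. -/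
noncomputable def gibbs {m d : ℕ} (𝒜 : Set (EuclideanSpace ℝ (Fin m))) (γ : ℝ)
    (f : EuclideanSpace ℝ (Fin m) → EuclideanSpace ℝ (Fin d))
    (r : EuclideanSpace ℝ (Fin m) → ℝ)
    (z : EuclideanSpace ℝ (Fin d)) (a : EuclideanSpace ℝ (Fin m)) : ℝ :=
  Real.exp ((⟪f a, z⟫ + r a) / γ) /
    ∫ a' in 𝒜, Real.exp ((⟪f a', z⟫ + r a') / γ)

/-- `G_ρ(z,Z) = ∫_𝒜 (f(a)·Z + r(a) − γ log ρ_z(a)) ρ_z(a) da`, where `ρ_z` is the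
Gibbs density built from the drift `g` (and `G = G_π` corresponds to `g = f`). -/
noncomputable def gibbsG {m d : ℕ} (𝒜 : Set (EuclideanSpace ℝ (Fin m))) (γ : ℝ)
    (f g : EuclideanSpace ℝ (Fin m) → EuclideanSpace ℝ (Fin d))
    (r : EuclideanSpace ℝ (Fin m) → ℝ)
    (z Z : EuclideanSpace ℝ (Fin d)) : ℝ :=
  ∫ a in 𝒜, (⟪f a, Z⟫ + r a - γ * Real.log (gibbs 𝒜 γ g r z a)) * gibbs 𝒜 γ g r z a

/-!
For a Gibbs density `ρ_w = e^w / ∫ e^w` the entropy term collapses: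
`∫ (c - γ log ρ_w) ρ_w = ∫ (c - γ w) ρ_w + γ log ∫ e^w`, so `G` is the average of a bounded
function plus a log-partition function. If two weights differ by at most `δ` uniformly, their
log-partition functions differ by at most `δ`, and `ρ_{w'} = ρ_w e^u` with `|u| ≤ 2δ`, so the
densities are `4δ`-close in `L¹`. For the weights `(g·z' + r)/γ` and `(f·z + r)/γ` one may take
`γδ = S + B‖z' - z‖`, where `S` bounds `|(f - g)·z'|` on `𝒜`; this gives the estimate with
`L = 2(1 + B)(1 + 4BC)`.
-/

open Real

section GibbsDensity

variable {α : Type*} [MeasurableSpace α] {μ : Measure α} {w w' : α → ℝ}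

noncomputable def gibbsDensity (μ : Measure α) (w : α → ℝ) (a : α) : ℝ :=
  exp (w a) / ∫ x, exp (w x) ∂μ

lemma integrable_exp_of_ae_le [IsFiniteMeasure μ] {K : ℝ} (hw : AEStronglyMeasurable w μ)
    (hK : ∀ᵐ a ∂μ, w a ≤ K) : Integrable (fun a => exp (w a)) μ :=
  .of_bound (continuous_exp.comp_aestronglyMeasurable hw) (exp K) <| by
    filter_upwards [hK] with a ha
    rw [norm_of_nonneg (exp_pos _).le]
    exact exp_le_exp.2 ha

lemma abs_integral_mul_le {h q : α → ℝ} {K : ℝ} (hq : Integrable q μ)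
    (hh : ∀ᵐ a ∂μ, |h a| ≤ K) : |∫ a, h a * q a ∂μ| ≤ K * ∫ a, |q a| ∂μ := by
  rw [← integral_const_mul, ← norm_eq_abs]
  refine norm_integral_le_of_norm_le (hq.abs.const_mul K) ?_
  filter_upwards [hh] with a ha
  rw [norm_mul, norm_eq_abs, norm_eq_abs]
  exact mul_le_mul_of_nonneg_right ha (abs_nonneg _)

lemma integrable_mul_of_ae_abs_le {u q : α → ℝ} {K : ℝ} (hq : Integrable q μ)
    (hu : AEStronglyMeasurable u μ) (hK : ∀ᵐ a ∂μ, |u a| ≤ K) :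
    Integrable (fun a => u a * q a) μ :=
  hq.bdd_mul hu (by simpa only [norm_eq_abs] using hK)

lemma ae_abs_le_add {u v : α → ℝ} {K₁ K₂ : ℝ} (h₁ : ∀ᵐ a ∂μ, |v a - u a| ≤ K₁)
    (h₂ : ∀ᵐ a ∂μ, |u a| ≤ K₂) : ∀ᵐ a ∂μ, |v a| ≤ K₁ + K₂ := by
  filter_upwards [h₁, h₂] with a ha₁ ha₂
  linarith [abs_sub_abs_le_abs_sub (v a) (u a)]

lemma abs_integral_mul_sub_integral_mul_le {u v p q : α → ℝ} {K₁ K₂ : ℝ} (hp : Integrable p μ)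
    (hq : Integrable q μ) (hu : AEStronglyMeasurable u μ) (hv : AEStronglyMeasurable v μ)
    (hK₁ : ∀ᵐ a ∂μ, |v a - u a| ≤ K₁) (hK₂ : ∀ᵐ a ∂μ, |u a| ≤ K₂) :
    |∫ a, v a * q a ∂μ - ∫ a, u a * p a ∂μ| ≤
      K₁ * ∫ a, |q a| ∂μ + K₂ * ∫ a, |q a - p a| ∂μ := by
  have hsplit : ∫ a, v a * q a ∂μ - ∫ a, u a * p a ∂μ =
      ∫ a, (v a - u a) * q a ∂μ + ∫ a, u a * (q a - p a) ∂μ := by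
    rw [← integral_sub (integrable_mul_of_ae_abs_le hq hv (ae_abs_le_add hK₁ hK₂))
        (integrable_mul_of_ae_abs_le hp hu hK₂),
      ← integral_add (integrable_mul_of_ae_abs_le (u := fun a => v a - u a) hq (hv.sub hu) hK₁)
        (integrable_mul_of_ae_abs_le (q := fun a => q a - p a) (hq.sub hp) hu hK₂)]
    congr 1
    funext a
    ring
  rw [hsplit]
  exact (abs_add_le _ _).trans
    (add_le_add (abs_integral_mul_le hq hK₁) (abs_integral_mul_le (hq.sub hp) hK₂))

lemma gibbsDensity_nonneg (a : α) : 0 ≤ gibbsDensity μ w a :=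
  div_nonneg (exp_pos _).le (integral_nonneg fun _ => (exp_pos _).le)

lemma integrable_gibbsDensity (hw : Integrable (fun a => exp (w a)) μ) :
    Integrable (gibbsDensity μ w) μ :=
  hw.div_const _

lemma integral_exp_le_exp_mul {δ : ℝ} (hw : Integrable (fun a => exp (w a)) μ)
    (hw' : Integrable (fun a => exp (w' a)) μ) (hδ : ∀ᵐ a ∂μ, w' a ≤ w a + δ) :
    ∫ a, exp (w' a) ∂μ ≤ exp δ * ∫ a, exp (w a) ∂μ := by
  rw [← integral_const_mul]
  refine integral_mono_ae hw' (hw.const_mul _) ?_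
  filter_upwards [hδ] with a ha
  rw [← exp_add]
  exact exp_le_exp.2 (by linarith)

variable [NeZero μ]

lemma integral_gibbsDensity (hw : Integrable (fun a => exp (w a)) μ) :
    ∫ a, gibbsDensity μ w a ∂μ = 1 := by
  simp only [gibbsDensity]
  rw [integral_div, div_self (integral_exp_pos hw).ne']

lemma log_gibbsDensity (hw : Integrable (fun a => exp (w a)) μ) (a : α) :
    log (gibbsDensity μ w a) = w a - log (∫ x, exp (w x) ∂μ) := by
  rw [gibbsDensity, log_div (exp_ne_zero _) (integral_exp_pos hw).ne', log_exp]

lemma integral_sub_mul_log_mul_gibbsDensity (hw : Integrable (fun a => exp (w a)) μ)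
    {c : α → ℝ} (γ : ℝ) (hc : Integrable (fun a => (c a - γ * w a) * gibbsDensity μ w a) μ) :
    ∫ a, (c a - γ * log (gibbsDensity μ w a)) * gibbsDensity μ w a ∂μ =
      ∫ a, (c a - γ * w a) * gibbsDensity μ w a ∂μ + γ * log (∫ x, exp (w x) ∂μ) := by
  have hsplit : ∀ a, (c a - γ * log (gibbsDensity μ w a)) * gibbsDensity μ w a =
      (c a - γ * w a) * gibbsDensity μ w a +
        γ * log (∫ x, exp (w x) ∂μ) * gibbsDensity μ w a := by
    intro a
    rw [log_gibbsDensity hw]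
    ring
  simp_rw [hsplit]
  rw [integral_add hc ((integrable_gibbsDensity hw).const_mul _), integral_const_mul,
    integral_gibbsDensity hw, mul_one]

lemma log_integral_exp_le_add {δ : ℝ} (hw : Integrable (fun a => exp (w a)) μ)
    (hw' : Integrable (fun a => exp (w' a)) μ) (hδ : ∀ᵐ a ∂μ, w' a ≤ w a + δ) :
    log (∫ a, exp (w' a) ∂μ) ≤ log (∫ a, exp (w a) ∂μ) + δ :=
  calc log (∫ a, exp (w' a) ∂μ) ≤ log (exp δ * ∫ a, exp (w a) ∂μ) :=
        log_le_log (integral_exp_pos hw') (integral_exp_le_exp_mul hw hw' hδ)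
    _ = log (∫ a, exp (w a) ∂μ) + δ := by
        rw [log_mul (exp_ne_zero _) (integral_exp_pos hw).ne', log_exp, add_comm]

lemma abs_log_integral_exp_sub_le {δ : ℝ} (hw : Integrable (fun a => exp (w a)) μ)
    (hw' : Integrable (fun a => exp (w' a)) μ) (hδ : ∀ᵐ a ∂μ, |w' a - w a| ≤ δ) :
    |log (∫ a, exp (w' a) ∂μ) - log (∫ a, exp (w a) ∂μ)| ≤ δ := by
  rw [abs_sub_le_iff]
  constructor
  · linarith [log_integral_exp_le_add hw hw' (hδ.mono fun a ha => by linarith [(abs_le.1 ha).2])]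
  · linarith [log_integral_exp_le_add hw' hw (hδ.mono fun a ha => by linarith [(abs_le.1 ha).1])]

lemma gibbsDensity_eq_mul_exp (hw : Integrable (fun a => exp (w a)) μ)
    (hw' : Integrable (fun a => exp (w' a)) μ) (a : α) :
    gibbsDensity μ w' a = gibbsDensity μ w a *
      exp (w' a - w a - (log (∫ x, exp (w' x) ∂μ) - log (∫ x, exp (w x) ∂μ))) := by
  have hZ := integral_exp_pos hw
  have hZ' := integral_exp_pos hw'
  rw [gibbsDensity, gibbsDensity, exp_sub, exp_sub, exp_sub, exp_log hZ, exp_log hZ']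
  field_simp

lemma integral_abs_gibbsDensity_sub_le {δ : ℝ} (hw : Integrable (fun a => exp (w a)) μ)
    (hw' : Integrable (fun a => exp (w' a)) μ) (hδ : ∀ᵐ a ∂μ, |w' a - w a| ≤ δ) :
    ∫ a, |gibbsDensity μ w' a - gibbsDensity μ w a| ∂μ ≤ 4 * δ := by
  have hp := integrable_gibbsDensity hw
  have hp' := integrable_gibbsDensity hw'
  rcases le_or_gt (2 * δ) 1 with hsmall | hlarge
  · have hlog := abs_log_integral_exp_sub_le hw hw' hδ
    calc ∫ a, |gibbsDensity μ w' a - gibbsDensity μ w a| ∂μ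
        ≤ ∫ a, 4 * δ * gibbsDensity μ w a ∂μ := by
          refine integral_mono_ae (hp'.sub hp).abs (hp.const_mul _) ?_
          filter_upwards [hδ] with a ha
          have hu : |w' a - w a - (log (∫ x, exp (w' x) ∂μ) - log (∫ x, exp (w x) ∂μ))|
              ≤ 2 * δ := (abs_sub _ _).trans (by linarith)
          rw [gibbsDensity_eq_mul_exp hw hw' a, ← mul_sub_one, abs_mul,
            abs_of_nonneg (gibbsDensity_nonneg a), mul_comm]
          refine mul_le_mul_of_nonneg_right ?_ (gibbsDensity_nonneg a)
          linarith [abs_exp_sub_one_le (hu.trans hsmall)]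
      _ = 4 * δ := by rw [integral_const_mul, integral_gibbsDensity hw, mul_one]
  · calc ∫ a, |gibbsDensity μ w' a - gibbsDensity μ w a| ∂μ
        ≤ ∫ a, (gibbsDensity μ w' a + gibbsDensity μ w a) ∂μ := by
          refine integral_mono (hp'.sub hp).abs (hp'.add hp) fun a => ?_
          have := gibbsDensity_nonneg (μ := μ) (w := w) a
          have := gibbsDensity_nonneg (μ := μ) (w := w') a
          exact abs_sub_le_iff.2 ⟨by linarith, by linarith⟩
      _ = 2 := by
          rw [integral_add hp' hp, integral_gibbsDensity hw', integral_gibbsDensity hw]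
          norm_num
      _ ≤ 4 * δ := by linarith

theorem abs_gibbs_free_energy_sub_le {c c' : α → ℝ} {γ δ K₁ K₂ : ℝ} (hγ : 0 ≤ γ)
    (hw : Integrable (fun a => exp (w a)) μ) (hw' : Integrable (fun a => exp (w' a)) μ)
    (hh : AEStronglyMeasurable (fun a => c a - γ * w a) μ)
    (hh' : AEStronglyMeasurable (fun a => c' a - γ * w' a) μ)
    (hδ : ∀ᵐ a ∂μ, |w' a - w a| ≤ δ)
    (hK₁ : ∀ᵐ a ∂μ, |(c' a - γ * w' a) - (c a - γ * w a)| ≤ K₁)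
    (hK₂ : ∀ᵐ a ∂μ, |c a - γ * w a| ≤ K₂) :
    |∫ a, (c' a - γ * log (gibbsDensity μ w' a)) * gibbsDensity μ w' a ∂μ -
        ∫ a, (c a - γ * log (gibbsDensity μ w a)) * gibbsDensity μ w a ∂μ|
      ≤ K₁ + 4 * K₂ * δ + γ * δ := by
  have hp := integrable_gibbsDensity hw
  have hp' := integrable_gibbsDensity hw'
  have hK₂_nonneg : 0 ≤ K₂ := by
    obtain ⟨a, ha⟩ := hK₂.exists
    exact (abs_nonneg _).trans ha
  rw [integral_sub_mul_log_mul_gibbsDensity hw' γ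
      (integrable_mul_of_ae_abs_le hp' hh' (ae_abs_le_add hK₁ hK₂)),
    integral_sub_mul_log_mul_gibbsDensity hw γ (integrable_mul_of_ae_abs_le hp hh hK₂)]
  calc _ ≤ |∫ a, (c' a - γ * w' a) * gibbsDensity μ w' a ∂μ -
          ∫ a, (c a - γ * w a) * gibbsDensity μ w a ∂μ| +
        |γ * (log (∫ x, exp (w' x) ∂μ) - log (∫ x, exp (w x) ∂μ))| :=
          le_of_eq_of_le (by congr 1; ring) (abs_add_le _ _)
    _ ≤ K₁ * ∫ a, |gibbsDensity μ w' a| ∂μ +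
          K₂ * ∫ a, |gibbsDensity μ w' a - gibbsDensity μ w a| ∂μ + γ * δ := by
          refine add_le_add (abs_integral_mul_sub_integral_mul_le hp hp' hh hh' hK₁ hK₂) ?_
          rw [abs_mul, abs_of_nonneg hγ]
          exact mul_le_mul_of_nonneg_left (abs_log_integral_exp_sub_le hw hw' hδ) hγ
    _ ≤ K₁ + K₂ * (4 * δ) + γ * δ := by
          simp_rw [abs_of_nonneg (gibbsDensity_nonneg _), integral_gibbsDensity hw', mul_one]
          gcongr
          exact integral_abs_gibbsDensity_sub_le hw hw' hδ
    _ = K₁ + 4 * K₂ * δ + γ * δ := by ring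

end GibbsDensity

lemma abs_inner_le_of_norm_le {E : Type*} [NormedAddCommGroup E] [InnerProductSpace ℝ E]
    {x : E} {B : ℝ} (hx : ‖x‖ ≤ B) (v : E) : |⟪x, v⟫| ≤ B * ‖v‖ :=
  (abs_real_inner_le_norm x v).trans (mul_le_mul_of_nonneg_right hx (norm_nonneg v))

section GibbsG

variable {m d : ℕ} {𝒜 : Set (EuclideanSpace ℝ (Fin m))} {γ B R : ℝ}
  {f g : EuclideanSpace ℝ (Fin m) → EuclideanSpace ℝ (Fin d)} {r : EuclideanSpace ℝ (Fin m) → ℝ}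

lemma integrable_exp_inner_add_div (hA : MeasurableSet 𝒜) (hfin : volume 𝒜 ≠ ⊤) (hγ : 0 < γ)
    (hfm : Measurable f) (hrm : Measurable r) (hfb : ∀ a ∈ 𝒜, ‖f a‖ ≤ B)
    (hrb : ∀ a ∈ 𝒜, |r a| ≤ R) (z : EuclideanSpace ℝ (Fin d)) :
    Integrable (fun a => exp ((⟪f a, z⟫ + r a) / γ)) (volume.restrict 𝒜) := by
  have : IsFiniteMeasure (volume.restrict 𝒜) := isFiniteMeasure_restrict.2 hfin
  refine integrable_exp_of_ae_le (K := (B * ‖z‖ + R) / γ) (by fun_prop)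
    (ae_restrict_of_forall_mem hA fun a ha => div_le_div_of_nonneg_right ?_ hγ.le)
  linarith [(abs_le.1 (abs_inner_le_of_norm_le (hfb a ha) z)).2, (abs_le.1 (hrb a ha)).2]

lemma gibbsG_eq_integral_gibbsDensity (z Z : EuclideanSpace ℝ (Fin d)) :
    gibbsG 𝒜 γ f g r z Z =
      ∫ a in 𝒜, (⟪f a, Z⟫ + r a -
        γ * log (gibbsDensity (volume.restrict 𝒜) (fun a => (⟪g a, z⟫ + r a) / γ) a)) *
          gibbsDensity (volume.restrict 𝒜) (fun a => (⟪g a, z⟫ + r a) / γ) a :=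
  rfl

theorem abs_gibbsG_sub_le (hA : MeasurableSet 𝒜) (hpos : volume 𝒜 ≠ 0) (hfin : volume 𝒜 ≠ ⊤)
    (hγ : 0 < γ) (hfm : Measurable f) (hgm : Measurable g) (hrm : Measurable r)
    (hfb : ∀ a ∈ 𝒜, ‖f a‖ ≤ B) (hgb : ∀ a ∈ 𝒜, ‖g a‖ ≤ B) (hrb : ∀ a ∈ 𝒜, |r a| ≤ R)
    {z z' Z Z' : EuclideanSpace ℝ (Fin d)} {S : ℝ} (hS : ∀ a ∈ 𝒜, |⟪f a - g a, z'⟫| ≤ S) :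
    |gibbsG 𝒜 γ f g r z' Z' - gibbsG 𝒜 γ f f r z Z| ≤
      (B * ‖Z' - Z‖ + B * ‖z' - z‖ + S) + 4 * (B * ‖Z - z‖) * ((S + B * ‖z' - z‖) / γ) +
        γ * ((S + B * ‖z' - z‖) / γ) := by
  have : NeZero (volume.restrict 𝒜) := ⟨Measure.restrict_eq_zero.not.2 hpos⟩
  rw [gibbsG_eq_integral_gibbsDensity, gibbsG_eq_integral_gibbsDensity]
  refine abs_gibbs_free_energy_sub_le hγ.le
    (integrable_exp_inner_add_div hA hfin hγ hfm hrm hfb hrb z)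
    (integrable_exp_inner_add_div hA hfin hγ hgm hrm hgb hrb z') (by fun_prop) (by fun_prop)
    (ae_restrict_of_forall_mem hA fun a ha => ?_) (ae_restrict_of_forall_mem hA fun a ha => ?_)
    (ae_restrict_of_forall_mem hA fun a ha => ?_) <;>
    have hf := fun v => abs_inner_le_of_norm_le (hfb a ha) v
  · rw [← sub_div, abs_div, abs_of_pos hγ]
    gcongr
    have e : ⟪g a, z'⟫ + r a - (⟪f a, z⟫ + r a) = ⟪f a, z' - z⟫ - ⟪f a - g a, z'⟫ := by
      simp only [inner_sub_left, inner_sub_right]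
      ring
    rw [e]
    linarith [abs_sub (⟪f a, z' - z⟫) (⟪f a - g a, z'⟫), hf (z' - z), hS a ha]
  · have e : ⟪f a, Z'⟫ + r a - γ * ((⟪g a, z'⟫ + r a) / γ) -
        (⟪f a, Z⟫ + r a - γ * ((⟪f a, z⟫ + r a) / γ)) =
        ⟪f a, Z' - Z⟫ + -⟪f a, z' - z⟫ + ⟪f a - g a, z'⟫ := by
      simp only [mul_div_cancel₀ _ hγ.ne', inner_sub_left, inner_sub_right]
      ring
    rw [e]
    linarith [abs_add_three (⟪f a, Z' - Z⟫) (-⟪f a, z' - z⟫) (⟪f a - g a, z'⟫),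
      abs_neg (⟪f a, z' - z⟫), hf (Z' - Z), hf (z' - z), hS a ha]
  · have e : ⟪f a, Z⟫ + r a - γ * ((⟪f a, z⟫ + r a) / γ) = ⟪f a, Z - z⟫ := by
      rw [mul_div_cancel₀ _ hγ.ne', inner_sub_right]
      ring
    exact e ▸ hf (Z - z)

theorem abs_gibbsG_sub_le_of_norm_le (hA : MeasurableSet 𝒜) (hpos : volume 𝒜 ≠ 0)
    (hfin : volume 𝒜 ≠ ⊤) (hγ : 0 < γ) (hfm : Measurable f) (hgm : Measurable g)
    (hrm : Measurable r) (hfb : ∀ a ∈ 𝒜, ‖f a‖ ≤ B) (hgb : ∀ a ∈ 𝒜, ‖g a‖ ≤ B)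
    (hrb : ∀ a ∈ 𝒜, |r a| ≤ R) {z z' Z Z' : EuclideanSpace ℝ (Fin d)} {C S L : ℝ}
    (hz : ‖z‖ ≤ C) (hZ : ‖Z‖ ≤ C) (hS : ∀ a ∈ 𝒜, |⟪f a - g a, z'⟫| ≤ S)
    (hL : 2 * (1 + B) * (1 + 4 * B * C) ≤ L) :
    |gibbsG 𝒜 γ f g r z' Z' - gibbsG 𝒜 γ f f r z Z| ≤
      L * (1 + exp (L / γ) + γ⁻¹ * exp (L / γ)) * ‖z' - z‖ + L * ‖Z' - Z‖ +
        L * (1 + γ⁻¹ * exp (L / γ)) * S := by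
  obtain ⟨a₀, ha₀⟩ := nonempty_of_measure_ne_zero hpos
  have hB : 0 ≤ B := (norm_nonneg _).trans (hfb a₀ ha₀)
  have hC : 0 ≤ C := (norm_nonneg _).trans hz
  have hS₀ : 0 ≤ S := (abs_nonneg _).trans (hS a₀ ha₀)
  have hL₀ : 0 ≤ L := le_trans (by positivity) hL
  have hL' : B ≤ L ∧ 2 ≤ L ∧ 2 * B ≤ L ∧ 8 * B * C ≤ L ∧ 8 * B ^ 2 * C ≤ L := by
    refine ⟨?_, ?_, ?_, ?_, ?_⟩ <;> nlinarith [mul_nonneg hB hC, mul_nonneg (mul_nonneg hB hB) hC]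
  have hLE : L ≤ L * exp (L / γ) := le_mul_of_one_le_right hL₀ (one_le_exp (by positivity))
  have hZz : ‖Z - z‖ ≤ 2 * C := by linarith [norm_sub_le Z z]
  have hx := norm_nonneg (z' - z)
  have hy := norm_nonneg (Z' - Z)
  have ht : 0 < γ⁻¹ := inv_pos.2 hγ
  refine (abs_gibbsG_sub_le hA hpos hfin hγ hfm hgm hrm hfb hgb hrb hS).trans ?_
  rw [mul_div_cancel₀ _ hγ.ne', div_eq_mul_inv]
  calc _ ≤ B * ‖Z' - Z‖ + 2 * B * ‖z' - z‖ + 2 * S + 8 * B * C * (γ⁻¹ * S) +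
        8 * B ^ 2 * C * (γ⁻¹ * ‖z' - z‖) := by
        linarith [mul_le_mul_of_nonneg_left hZz
          (by positivity : 0 ≤ 4 * B * ((S + B * ‖z' - z‖) * γ⁻¹))]
    _ ≤ _ := by
        linarith [mul_nonneg (sub_nonneg.2 hL'.1) hy, mul_nonneg (sub_nonneg.2 hL'.2.1) hS₀,
          mul_nonneg (sub_nonneg.2 hL'.2.2.1) hx,
          mul_nonneg (sub_nonneg.2 (hL'.2.2.2.1.trans hLE)) (mul_nonneg ht.le hS₀),
          mul_nonneg (sub_nonneg.2 (hL'.2.2.2.2.trans hLE)) (mul_nonneg ht.le hx),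
          mul_nonneg (mul_nonneg hL₀ (exp_pos (L / γ)).le) hx]

end GibbsG

theorem stmt9_general (B R C : ℝ) (hB : 0 < B) (hC : 0 < C) :
    ∃ L > 0, ∀ (m d : ℕ) (𝒜 : Set (EuclideanSpace ℝ (Fin m))),
      IsCompact 𝒜 → 0 < volume 𝒜 → volume 𝒜 < ⊤ →
      ∀ γ : ℝ, 0 < γ →
      ∀ (f g : EuclideanSpace ℝ (Fin m) → EuclideanSpace ℝ (Fin d))
        (r : EuclideanSpace ℝ (Fin m) → ℝ),
        Measurable f → Measurable g → Measurable r →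
        (∀ a ∈ 𝒜, ‖f a‖ ≤ B) → (∀ a ∈ 𝒜, ‖g a‖ ≤ B) → (∀ a ∈ 𝒜, |r a| ≤ R) →
      ∀ z z' Z Z' : EuclideanSpace ℝ (Fin d), ‖z‖ ≤ C → ‖Z‖ ≤ C → ‖Z'‖ ≤ C →
        |gibbsG 𝒜 γ f g r z' Z' - gibbsG 𝒜 γ f f r z Z| ≤
          L * (1 + Real.exp (L / γ) + γ⁻¹ * Real.exp (L / γ)) * ‖z' - z‖ +
            L * ‖Z' - Z‖ +
            L * (1 + γ⁻¹ * Real.exp (L / γ)) *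
              sSup ((fun a => |⟪f a - g a, z'⟫|) '' 𝒜) := by
  refine ⟨2 * (1 + B) * (1 + 4 * B * C), by positivity, ?_⟩
  intro m d 𝒜 hcomp hpos hfin γ hγ f g r hfm hgm hrm hfb hgb hrb z z' Z Z' hz hZ _
  have hbdd : BddAbove ((fun a => |⟪f a - g a, z'⟫|) '' 𝒜) := by
    refine ⟨2 * B * ‖z'‖, Set.forall_mem_image.2 fun a ha => ?_⟩
    refine abs_inner_le_of_norm_le ((norm_sub_le _ _).trans ?_) z'
    linarith [hfb a ha, hgb a ha]
  exact abs_gibbsG_sub_le_of_norm_le hcomp.measurableSet hpos.ne' hfin.ne hγ hfm hgm hrm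
    hfb hgb hrb hz hZ (fun a ha => le_csSup hbdd ⟨a, ha, rfl⟩) le_rfl

/-- Perturbed Lipschitz property of `G`: the constant `L` depends only on
`B`, `R` and `C`, and in particular not on `γ`, `f`, `g` or `r`. -/
theorem stmt9 (B R C : ℝ) (hB : 0 < B) (hR : 0 < R) (hC : 0 < C) :
    ∃ L > 0, ∀ (m d : ℕ) (𝒜 : Set (EuclideanSpace ℝ (Fin m))),
      IsCompact 𝒜 → 0 < volume 𝒜 → volume 𝒜 < ⊤ →
      ∀ γ : ℝ, 0 < γ →
      ∀ (f g : EuclideanSpace ℝ (Fin m) → EuclideanSpace ℝ (Fin d))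
        (r : EuclideanSpace ℝ (Fin m) → ℝ),
        Measurable f → Measurable g → Measurable r →
        (∀ a ∈ 𝒜, ‖f a‖ ≤ B) → (∀ a ∈ 𝒜, ‖g a‖ ≤ B) → (∀ a ∈ 𝒜, |r a| ≤ R) →
      ∀ z z' Z Z' : EuclideanSpace ℝ (Fin d), ‖z‖ ≤ C → ‖Z‖ ≤ C → ‖Z'‖ ≤ C →
        |gibbsG 𝒜 γ f g r z' Z' - gibbsG 𝒜 γ f f r z Z| ≤
          L * (1 + Real.exp (L / γ) + γ⁻¹ * Real.exp (L / γ)) * ‖z' - z‖ +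
            L * ‖Z' - Z‖ +
            L * (1 + γ⁻¹ * Real.exp (L / γ)) *
              sSup ((fun a => |⟪f a - g a, z'⟫|) '' 𝒜) :=
  stmt9_general B R C hB hC
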